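/- Let d ≥ 3 with d ≠ 4, fix ζ' ∈ ℝ^d with first coordinate ζ₁' ≠ 0, let r > 0, and set ρ(ζ) = |ζ − ζ'|. Define P(ζ) = ( ζ₁ ζ₁' − ρ²/(d−4) )·ρ^{2−d} − (r²/d)·( (d−2)·ζ₁·(ζ₁' − ζ₁)·ρ^{−d} − ρ^{2−d} ) − ( ρ² + 2 ζ₁ ζ₁' + (d−2) ζ₁² )·r^{2−d}/d + r^{4−d}/(d−4). Then: (i) P(ζ) = 0 for every ζ with |ζ − ζ'| = r; and (ii) ζ₁·ΔP(ζ) = 2·∂P/∂ζ₁(ζ) for every ζ with ζ₁ ≠ 0 and ζ ≠ ζ'. Thus P is the pressure of the free-boundary flow of an expanding sphere of radius r centered at ζ' in the medium with κη = ζ₁⁻², η = 1. -/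

import Mathlib

/-- First partial derivative in direction `i` of a scalar function on `ℝ^d`. -/
noncomputable def pd {d : ℕ} (i : Fin d) (f : EuclideanSpace ℝ (Fin d) → ℝ)
    (ζ : EuclideanSpace ℝ (Fin d)) : ℝ :=
  fderiv ℝ f ζ (EuclideanSpace.single i 1)

/-- Laplacian `Δ = Σᵢ ∂²/∂ζᵢ²` of a scalar function on `ℝ^d`. -/
noncomputable def lap {d : ℕ} (f : EuclideanSpace ℝ (Fin d) → ℝ)
    (ζ : EuclideanSpace ℝ (Fin d)) : ℝ :=
  ∑ i : Fin d, pd i (pd i f) ζ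

/-! Away from `ζ'`, `P` is a linear combination of monomials `ζ₁ ^ m * s ^ e` in the first
coordinate and the squared distance `s = |ζ - ζ'|²`. For a product `q(ζ₁) g(s)` the product and
chain rules give `∂₁ = q' g + 2 q g' (ζ₁ - ζ₁')` and
`Δ = q'' g + 4 q' g' (ζ₁ - ζ₁') + q (4 s g'' + 2 d g')`, so `ζ₁ ΔP - 2 ∂₁P` becomes an explicit
combination of powers of `s` that cancels identically. The boundary condition is the identity
obtained by substituting `s = r²`. -/

open Filter Topology

theorem ContDiffAt.eventually_differentiableAt {𝕜 E F : Type*} [NontriviallyNormedField 𝕜]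
    [NormedAddCommGroup E] [NormedSpace 𝕜 E] [NormedAddCommGroup F] [NormedSpace 𝕜 F]
    {f : E → F} {x : E} {n : ℕ} (hf : ContDiffAt 𝕜 n f x) (hn : n ≠ 0) :
    ∀ᶠ y in 𝓝 x, DifferentiableAt 𝕜 f y :=
  (hf.eventually (by simp)).mono fun _ hy => hy.differentiableAt (by exact_mod_cast hn)

section PartialDerivatives

variable {d : ℕ} {f g : EuclideanSpace ℝ (Fin d) → ℝ} {q : ℝ → ℝ}
  {z : EuclideanSpace ℝ (Fin d)}

theorem DifferentiableAt.comp_apply (i : Fin d) (hq : DifferentiableAt ℝ q (z i)) :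
    DifferentiableAt ℝ (fun w => q (w i)) z :=
  hq.comp z (EuclideanSpace.proj (𝕜 := ℝ) i).differentiableAt

theorem DifferentiableAt.comp_normSq_sub (c : EuclideanSpace ℝ (Fin d))
    (hq : DifferentiableAt ℝ q (‖z - c‖ ^ 2)) :
    DifferentiableAt ℝ (fun w => q (‖w - c‖ ^ 2)) z :=
  hq.comp z ((hasFDerivAt_id z).sub_const c).norm_sq.differentiableAt

theorem ContDiffAt.comp_apply {n : WithTop ℕ∞} (i : Fin d) (hq : ContDiffAt ℝ n q (z i)) :
    ContDiffAt ℝ n (fun w => q (w i)) z :=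
  hq.comp z (EuclideanSpace.proj (𝕜 := ℝ) i).contDiff.contDiffAt

theorem ContDiffAt.comp_normSq_sub {n : WithTop ℕ∞} (c : EuclideanSpace ℝ (Fin d))
    (hq : ContDiffAt ℝ n q (‖z - c‖ ^ 2)) :
    ContDiffAt ℝ n (fun w => q (‖w - c‖ ^ 2)) z :=
  hq.comp z ((contDiff_norm_sq ℝ).comp (contDiff_id.sub contDiff_const)).contDiffAt

theorem Filter.EventuallyEq.pd_eq (h : f =ᶠ[𝓝 z] g) (j : Fin d) : pd j f z = pd j g z := by
  simp only [pd, h.fderiv_eq]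

-- No differentiability needed: for `a ≠ 0`, `a * f` is differentiable exactly where `f` is.
theorem pd_const_mul (a : ℝ) (j : Fin d) : pd j (fun w => a * f w) = fun w => a * pd j f w := by
  funext w
  change fderiv ℝ (a • f) w _ = _
  rw [fderiv_const_smul_field]
  rfl

theorem pd_add (hf : DifferentiableAt ℝ f z) (hg : DifferentiableAt ℝ g z) (j : Fin d) :
    pd j (fun w => f w + g w) z = pd j f z + pd j g z := by
  simp only [pd, fderiv_fun_add hf hg, add_apply]

theorem pd_mul (hf : DifferentiableAt ℝ f z) (hg : DifferentiableAt ℝ g z) (j : Fin d) :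
    pd j (fun w => f w * g w) z = pd j f z * g z + f z * pd j g z := by
  simp only [pd, fderiv_fun_mul hf hg, add_apply, smul_apply, smul_eq_mul]
  ring

theorem pd_sum {ι : Type*} {t : Finset ι} {F : ι → EuclideanSpace ℝ (Fin d) → ℝ}
    (h : ∀ k ∈ t, DifferentiableAt ℝ (F k) z) (j : Fin d) :
    pd j (fun w => ∑ k ∈ t, F k w) z = ∑ k ∈ t, pd j (F k) z := by
  simp only [pd, fderiv_fun_sum h, sum_apply]

theorem ContDiffAt.differentiableAt_pd (hf : ContDiffAt ℝ 2 f z) (j : Fin d) :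
    DifferentiableAt ℝ (pd j f) z :=
  ((hf.fderiv_right (m := 1) (by norm_num)).clm_apply contDiffAt_const).differentiableAt
    one_ne_zero

theorem pd_comp_apply (i j : Fin d) (hq : DifferentiableAt ℝ q (z i)) :
    pd j (fun w => q (w i)) z = if j = i then deriv q (z i) else 0 := by
  have h : HasFDerivAt (fun w : EuclideanSpace ℝ (Fin d) => q (w i)) _ z :=
    hq.hasDerivAt.comp_hasFDerivAt z (EuclideanSpace.proj (𝕜 := ℝ) i).hasFDerivAt
  rw [pd, h.fderiv]
  simp [eq_comm]

theorem pd_comp_normSq_sub (c : EuclideanSpace ℝ (Fin d)) (j : Fin d)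
    (hq : DifferentiableAt ℝ q (‖z - c‖ ^ 2)) :
    pd j (fun w => q (‖w - c‖ ^ 2)) z = 2 * deriv q (‖z - c‖ ^ 2) * (z j - c j) := by
  have h : HasFDerivAt (fun w : EuclideanSpace ℝ (Fin d) => q (‖w - c‖ ^ 2)) _ z :=
    hq.hasDerivAt.comp_hasFDerivAt z ((hasFDerivAt_id z).sub_const c).norm_sq
  rw [pd, h.fderiv]
  simp only [map_sub, smul_apply, sub_apply, coe_innerSL_apply, EuclideanSpace.inner_single_right,
    Real.ringHom_apply, one_mul, nsmul_eq_mul, Nat.cast_ofNat, smul_eq_mul, id_eq,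
    ContinuousLinearMap.comp_id]
  ring

end PartialDerivatives

section Laplacian

variable {d : ℕ} {f g : EuclideanSpace ℝ (Fin d) → ℝ} {q : ℝ → ℝ}
  {z : EuclideanSpace ℝ (Fin d)}

theorem Filter.EventuallyEq.lap_eq (h : f =ᶠ[𝓝 z] g) : lap f z = lap g z :=
  Finset.sum_congr rfl fun j _ =>
    Filter.EventuallyEq.pd_eq (h.eventuallyEq_nhds.mono fun _ hw => hw.pd_eq j) j

theorem lap_const_mul (a : ℝ) : lap (fun w => a * f w) z = a * lap f z := by
  simp only [lap, pd_const_mul, Finset.mul_sum]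

theorem lap_sum {ι : Type*} {t : Finset ι} {F : ι → EuclideanSpace ℝ (Fin d) → ℝ}
    (h : ∀ k ∈ t, ContDiffAt ℝ 2 (F k) z) :
    lap (fun w => ∑ k ∈ t, F k w) z = ∑ k ∈ t, lap (F k) z := by
  have hev : ∀ j, pd j (fun w => ∑ k ∈ t, F k w) =ᶠ[𝓝 z] fun w => ∑ k ∈ t, pd j (F k) w := by
    intro j
    filter_upwards [(eventually_all_finset t).2 fun k hk =>
      (h k hk).eventually_differentiableAt two_ne_zero] with w hw using pd_sum hw j
  unfold lap
  rw [Finset.sum_comm]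
  refine Finset.sum_congr rfl fun j _ => ?_
  rw [(hev j).pd_eq, pd_sum fun k hk => (h k hk).differentiableAt_pd j]

theorem lap_mul (hf : ContDiffAt ℝ 2 f z) (hg : ContDiffAt ℝ 2 g z) :
    lap (fun w => f w * g w) z =
      lap f z * g z + 2 * ∑ j, pd j f z * pd j g z + f z * lap g z := by
  have hev : ∀ j, pd j (fun w => f w * g w) =ᶠ[𝓝 z]
      fun w => pd j f w * g w + f w * pd j g w := by
    intro j
    filter_upwards [hf.eventually_differentiableAt two_ne_zero,
      hg.eventually_differentiableAt two_ne_zero] with w hfw hgw using pd_mul hfw hgw j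
  have hterm : ∀ j, pd j (pd j fun w => f w * g w) z =
      pd j (pd j f) z * g z + 2 * (pd j f z * pd j g z) + f z * pd j (pd j g) z := by
    intro j
    have df := hf.differentiableAt two_ne_zero
    have dg := hg.differentiableAt two_ne_zero
    have dpf := hf.differentiableAt_pd j
    have dpg := hg.differentiableAt_pd j
    rw [(hev j).pd_eq, pd_add (dpf.fun_mul dg) (df.fun_mul dpg), pd_mul dpf dg, pd_mul df dpg]
    ring
  simp only [lap, hterm, Finset.sum_add_distrib, ← Finset.sum_mul, ← Finset.mul_sum]

theorem lap_comp_apply (i : Fin d) (hq : ContDiffAt ℝ 2 q (z i)) :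
    lap (fun w => q (w i)) z = deriv (deriv q) (z i) := by
  have hev : ∀ j, pd j (fun w => q (w i)) =ᶠ[𝓝 z]
      fun w => if j = i then deriv q (w i) else 0 := by
    intro j
    filter_upwards [((EuclideanSpace.proj (𝕜 := ℝ) i).continuous.tendsto z).eventually
      (hq.eventually_differentiableAt two_ne_zero)] with w hw using pd_comp_apply i j hw
  have hq' : DifferentiableAt ℝ (deriv q) (z i) :=
    (hq.derivWithin (m := 1) (by norm_num)).differentiableAt one_ne_zero
  unfold lap
  rw [Finset.sum_eq_single i (fun j _ hj => by rw [(hev j).pd_eq]; simp [hj, pd]) (by simp),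
    (hev i).pd_eq]
  simpa using pd_comp_apply i i hq'

theorem lap_comp_normSq_sub (c : EuclideanSpace ℝ (Fin d))
    (hq : ContDiffAt ℝ 2 q (‖z - c‖ ^ 2)) :
    lap (fun w => q (‖w - c‖ ^ 2)) z =
      4 * ‖z - c‖ ^ 2 * deriv (deriv q) (‖z - c‖ ^ 2) + 2 * d * deriv q (‖z - c‖ ^ 2) := by
  have hN : Continuous fun w : EuclideanSpace ℝ (Fin d) => ‖w - c‖ ^ 2 := by fun_prop
  have hev : ∀ j, pd j (fun w => q (‖w - c‖ ^ 2)) =ᶠ[𝓝 z]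
      fun w => 2 * deriv q (‖w - c‖ ^ 2) * (w j - c j) := by
    intro j
    filter_upwards [(hN.tendsto z).eventually (hq.eventually_differentiableAt two_ne_zero)]
      with w hw using pd_comp_normSq_sub c j hw
  have hq' : DifferentiableAt ℝ (deriv q) (‖z - c‖ ^ 2) :=
    (hq.derivWithin (m := 1) (by norm_num)).differentiableAt one_ne_zero
  have hterm : ∀ j, pd j (pd j fun w => q (‖w - c‖ ^ 2)) z =
      4 * deriv (deriv q) (‖z - c‖ ^ 2) * (z j - c j) ^ 2 + 2 * deriv q (‖z - c‖ ^ 2) := by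
    intro j
    have hcoord : DifferentiableAt ℝ (fun w : EuclideanSpace ℝ (Fin d) => w j - c j) z := by
      fun_prop
    rw [(hev j).pd_eq, pd_mul ((hq'.comp_normSq_sub c).const_mul 2) hcoord]
    simp only [pd_const_mul]
    rw [pd_comp_normSq_sub c j hq', pd_comp_apply j j (q := fun x => x - c j) (by fun_prop)]
    simp only [↓reduceIte, deriv_sub_const, deriv_id'', mul_one]
    ring
  simp only [lap, hterm, Finset.sum_add_distrib, ← Finset.mul_sum, Finset.sum_const,
    Finset.card_univ, Fintype.card_fin, nsmul_eq_mul]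
  simp only [EuclideanSpace.real_norm_sq_eq, PiLp.sub_apply]
  ring

end Laplacian

section AxialRadial

variable {d : ℕ} {z c : EuclideanSpace ℝ (Fin d)} {q g : ℝ → ℝ} {i : Fin d}

theorem pd_comp_apply_mul_comp_normSq_sub (hq : DifferentiableAt ℝ q (z i))
    (hg : DifferentiableAt ℝ g (‖z - c‖ ^ 2)) :
    pd i (fun w => q (w i) * g (‖w - c‖ ^ 2)) z =
      deriv q (z i) * g (‖z - c‖ ^ 2) + 2 * q (z i) * deriv g (‖z - c‖ ^ 2) * (z i - c i) := by
  rw [pd_mul (hq.comp_apply i) (hg.comp_normSq_sub c), pd_comp_apply i i hq,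
    pd_comp_normSq_sub c i hg, if_pos rfl]
  ring

theorem lap_comp_apply_mul_comp_normSq_sub (hq : ContDiffAt ℝ 2 q (z i))
    (hg : ContDiffAt ℝ 2 g (‖z - c‖ ^ 2)) :
    lap (fun w => q (w i) * g (‖w - c‖ ^ 2)) z =
      deriv (deriv q) (z i) * g (‖z - c‖ ^ 2)
      + 4 * deriv q (z i) * deriv g (‖z - c‖ ^ 2) * (z i - c i)
      + q (z i) * (4 * ‖z - c‖ ^ 2 * deriv (deriv g) (‖z - c‖ ^ 2)
        + 2 * d * deriv g (‖z - c‖ ^ 2)) := by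
  rw [lap_mul (hq.comp_apply i) (hg.comp_normSq_sub c), lap_comp_apply i hq,
    lap_comp_normSq_sub c hg]
  simp only [pd_comp_apply i _ (hq.differentiableAt two_ne_zero),
    pd_comp_normSq_sub c _ (hg.differentiableAt two_ne_zero), ite_mul, zero_mul,
    Finset.sum_ite_eq', Finset.mem_univ, if_true]
  ring

theorem contDiffAt_apply_pow_mul_normSq_sub_rpow {n : WithTop ℕ∞} (hz : z ≠ c) (m : ℕ) (e : ℝ) :
    ContDiffAt ℝ n (fun w => w i ^ m * (‖w - c‖ ^ 2) ^ e) z :=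
  have hs : ‖z - c‖ ^ 2 ≠ 0 := by simpa [sub_eq_zero] using hz
  ((contDiffAt_id.pow m).comp_apply i).mul ((Real.contDiffAt_rpow_const_of_ne hs).comp_normSq_sub c)

theorem pd_apply_pow_mul_normSq_sub_rpow (hz : z ≠ c) (m : ℕ) (e : ℝ) :
    pd i (fun w => w i ^ m * (‖w - c‖ ^ 2) ^ e) z =
      m * z i ^ (m - 1) * (‖z - c‖ ^ 2) ^ e
      + 2 * e * z i ^ m * (‖z - c‖ ^ 2) ^ (e - 1) * (z i - c i) := by
  have hs : ‖z - c‖ ^ 2 ≠ 0 := by simpa [sub_eq_zero] using hz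
  rw [pd_comp_apply_mul_comp_normSq_sub (q := fun x => x ^ m) (g := fun s => s ^ e)
    (by fun_prop) (Real.differentiableAt_rpow_const_of_ne e hs)]
  simp only [Real.deriv_rpow_const', deriv_pow_field]
  ring

theorem lap_apply_pow_mul_normSq_sub_rpow (hz : z ≠ c) (m : ℕ) (e : ℝ) :
    lap (fun w => w i ^ m * (‖w - c‖ ^ 2) ^ e) z =
      m * (m - 1) * z i ^ (m - 2) * (‖z - c‖ ^ 2) ^ e
      + (4 * m * e * (z i - c i) * z i ^ (m - 1) + 2 * e * (2 * e + d - 2) * z i ^ m)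
        * (‖z - c‖ ^ 2) ^ (e - 1) := by
  have hs : ‖z - c‖ ^ 2 ≠ 0 := by simpa [sub_eq_zero] using hz
  rw [lap_comp_apply_mul_comp_normSq_sub (q := fun x => x ^ m) (g := fun s => s ^ e)
    (by fun_prop) (Real.contDiffAt_rpow_const_of_ne hs)]
  have hpow : deriv (fun x : ℝ => x ^ m) = fun x => (m : ℝ) * x ^ (m - 1) :=
    funext fun _ => deriv_pow_field m
  simp only [hpow, Real.deriv_rpow_const', deriv_const_mul_field', deriv_pow_field]
  rw [sub_sub, Real.rpow_sub_one hs, Real.rpow_sub (by positivity), one_add_one_eq_two,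
    Real.rpow_two]
  -- `m - 1` and `m - 2` are truncated subtractions in `ℕ`, so `m = 0` is treated apart.
  rcases m with _ | m
  · simp only [CharP.cast_eq_zero, zero_mul, zero_add]
    field_simp
    ring
  · rw [show m + 1 - 2 = m - 1 by omega]
    simp only [Nat.cast_add, Nat.cast_one, add_tsub_cancel_right]
    field_simp
    ring

theorem pd_sum_mul_apply_pow_mul_normSq_sub_rpow {ι : Type*} (t : Finset ι) (a : ι → ℝ)
    (m : ι → ℕ) (e : ι → ℝ) (hz : z ≠ c) :
    pd i (fun w => ∑ k ∈ t, a k * (w i ^ m k * (‖w - c‖ ^ 2) ^ e k)) z =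
      ∑ k ∈ t, a k * (m k * z i ^ (m k - 1) * (‖z - c‖ ^ 2) ^ e k
        + 2 * e k * z i ^ m k * (‖z - c‖ ^ 2) ^ (e k - 1) * (z i - c i)) := by
  rw [pd_sum fun k _ => ((contDiffAt_apply_pow_mul_normSq_sub_rpow (n := 1) hz (m k)
    (e k)).differentiableAt one_ne_zero).const_mul (a k)]
  refine Finset.sum_congr rfl fun k _ => ?_
  simp only [pd_const_mul]
  rw [pd_apply_pow_mul_normSq_sub_rpow hz]

theorem lap_sum_mul_apply_pow_mul_normSq_sub_rpow {ι : Type*} (t : Finset ι) (a : ι → ℝ)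
    (m : ι → ℕ) (e : ι → ℝ) (hz : z ≠ c) :
    lap (fun w => ∑ k ∈ t, a k * (w i ^ m k * (‖w - c‖ ^ 2) ^ e k)) z =
      ∑ k ∈ t, a k * (m k * (m k - 1) * z i ^ (m k - 2) * (‖z - c‖ ^ 2) ^ e k
        + (4 * m k * e k * (z i - c i) * z i ^ (m k - 1) + 2 * e k * (2 * e k + d - 2) * z i ^ m k)
          * (‖z - c‖ ^ 2) ^ (e k - 1)) := by
  rw [lap_sum fun k _ => contDiffAt_const.mul (contDiffAt_apply_pow_mul_normSq_sub_rpow hz _ _)]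
  refine Finset.sum_congr rfl fun k _ => ?_
  rw [lap_const_mul, lap_apply_pow_mul_normSq_sub_rpow hz]

end AxialRadial

section Pressure

variable {d : ℕ} (i : Fin d) (ζ' : EuclideanSpace ℝ (Fin d)) (r : ℝ)

noncomputable def pressure (ζ : EuclideanSpace ℝ (Fin d)) : ℝ :=
  (ζ i * ζ' i - dist ζ ζ' ^ 2 / ((d : ℝ) - 4)) * dist ζ ζ' ^ ((2 : ℝ) - d)
    - r ^ 2 / (d : ℝ) *
        (((d : ℝ) - 2) * ζ i * (ζ' i - ζ i) * dist ζ ζ' ^ (-(d : ℝ)) - dist ζ ζ' ^ ((2 : ℝ) - d))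
    - (dist ζ ζ' ^ 2 + 2 * ζ i * ζ' i + ((d : ℝ) - 2) * ζ i ^ 2) * r ^ ((2 : ℝ) - d) / (d : ℝ)
    + r ^ ((4 : ℝ) - d) / ((d : ℝ) - 4)

variable {i ζ' r}

theorem pressure_eq_zero_of_dist_eq (hd4 : d ≠ 4) (hr : 0 < r) {ζ : EuclideanSpace ℝ (Fin d)}
    (hζ : dist ζ ζ' = r) : pressure i ζ' r ζ = 0 := by
  have hd : (d : ℝ) ≠ 0 := Nat.cast_ne_zero.2 (Fin.pos i).ne'
  have hd4' : (d : ℝ) - 4 ≠ 0 := sub_ne_zero.2 (by exact_mod_cast hd4)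
  have hpow : ∀ p : ℝ, r ^ (p - d) = r ^ p * r ^ (-(d : ℝ)) := fun p => by
    rw [sub_eq_add_neg, Real.rpow_add hr]
  rw [pressure, hζ, hpow 2, hpow 4, Real.rpow_ofNat, Real.rpow_ofNat]
  field_simp
  ring

theorem pressure_eventuallyEq_sum {z : EuclideanSpace ℝ (Fin d)} (hz : z ≠ ζ') :
    pressure i ζ' r =ᶠ[𝓝 z] fun w => ∑ k : Fin 9,
      ![ζ' i, -1 / (d - 4), -(r ^ 2 / d * (d - 2) * ζ' i), r ^ 2 / d * (d - 2), r ^ 2 / d,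
        -(r ^ ((2 : ℝ) - d) / d), -(2 * ζ' i * r ^ ((2 : ℝ) - d) / d),
        -((d - 2) * r ^ ((2 : ℝ) - d) / d), r ^ ((4 : ℝ) - d) / (d - 4)] k
      * (w i ^ ![1, 0, 1, 2, 0, 0, 1, 2, 0] k
        * (‖w - ζ'‖ ^ 2) ^ ![(1 : ℝ) - d / 2, 2 - d / 2, -d / 2, -d / 2, 1 - d / 2, 1, 0, 0, 0] k) := by
  filter_upwards [eventually_ne_nhds hz] with w hw
  have hρ : 0 < ‖w - ζ'‖ := norm_pos_iff.2 (sub_ne_zero.2 hw)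
  have hdist : ∀ p : ℝ, dist w ζ' ^ p = (‖w - ζ'‖ ^ 2) ^ (p / 2) := fun p => by
    rw [dist_eq_norm, ← Real.rpow_natCast, ← Real.rpow_mul hρ.le]
    congr 1
    ring
  have hs : 0 < ‖w - ζ'‖ ^ 2 := by positivity
  simp only [pressure, hdist, Fin.sum_univ_succ, Fin.sum_univ_zero, Matrix.cons_val_zero,
    Matrix.cons_val_succ, pow_zero, pow_one, Real.rpow_zero, Real.rpow_one, one_mul, add_zero]
  rw [dist_eq_norm, show ((2 : ℝ) - d) / 2 = 1 - d / 2 by ring, show -(d : ℝ) / 2 = -d / 2 by ring,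
    show (2 : ℝ) - d / 2 = 1 - d / 2 + 1 by ring, Real.rpow_add hs, Real.rpow_one]
  ring

theorem apply_mul_lap_pressure (hd4 : d ≠ 4) {z : EuclideanSpace ℝ (Fin d)} (hz : z ≠ ζ') :
    z i * lap (pressure i ζ' r) z = 2 * pd i (pressure i ζ' r) z := by
  have hloc := pressure_eventuallyEq_sum (i := i) (r := r) hz
  rw [hloc.lap_eq, hloc.pd_eq, lap_sum_mul_apply_pow_mul_normSq_sub_rpow _ _ _ _ hz,
    pd_sum_mul_apply_pow_mul_normSq_sub_rpow _ _ _ _ hz]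
  have hρ : 0 < ‖z - ζ'‖ := norm_pos_iff.2 (sub_ne_zero.2 hz)
  have hs : 0 < ‖z - ζ'‖ ^ 2 := pow_pos hρ 2
  have hd : (d : ℝ) ≠ 0 := Nat.cast_ne_zero.2 (Fin.pos i).ne'
  have hd4' : (d : ℝ) - 4 ≠ 0 := sub_ne_zero.2 (by exact_mod_cast hd4)
  simp only [Fin.sum_univ_succ, Fin.sum_univ_zero, Matrix.cons_val_zero, Matrix.cons_val_succ,
    Nat.cast_ofNat, Nat.cast_one, CharP.cast_eq_zero, pow_zero, pow_one, neg_div, Real.rpow_sub hs,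
    Real.rpow_neg hs.le, Real.rpow_zero, Real.rpow_one, Real.rpow_two]
  field_simp
  ring

end Pressure

/-- The pressure
`P(ζ) = (ζ₁ζ₁' − ρ²/(d−4))·ρ^{2−d} − (r²/d)·((d−2)ζ₁(ζ₁'−ζ₁)ρ^{−d} − ρ^{2−d})
 − (ρ² + 2ζ₁ζ₁' + (d−2)ζ₁²)·r^{2−d}/d + r^{4−d}/(d−4)`, `ρ = |ζ − ζ'|`,
solves the free-boundary problem of the expanding sphere of radius `r` centered
at `ζ'` in the medium with `κη = ζ₁⁻²`, `η = 1`: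
(i) `P` vanishes on the boundary sphere `|ζ − ζ'| = r`;
(ii) `ζ₁·ΔP = 2·∂₁P` (equivalently `∇·(ζ₁⁻² ∇P) = 0`) away from `ζ'` on
`{ζ₁ ≠ 0}` (for `d ≥ 3`, `d ≠ 4`). -/
theorem expanding_sphere_pressure (d : ℕ) (hd : 3 ≤ d) (hd4 : d ≠ 4)
    (ζ' : EuclideanSpace ℝ (Fin d))
    (r : ℝ) (hr : 0 < r)
    (P : EuclideanSpace ℝ (Fin d) → ℝ)
    (hP : ∀ ζ, P ζ =
      (ζ (⟨0, by omega⟩ : Fin d) * ζ' (⟨0, by omega⟩ : Fin d) -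
          dist ζ ζ' ^ 2 / ((d : ℝ) - 4)) * dist ζ ζ' ^ ((2 : ℝ) - d)
      - r ^ 2 / (d : ℝ) *
          (((d : ℝ) - 2) * ζ (⟨0, by omega⟩ : Fin d) *
              (ζ' (⟨0, by omega⟩ : Fin d) - ζ (⟨0, by omega⟩ : Fin d)) *
              dist ζ ζ' ^ (-(d : ℝ)) -
            dist ζ ζ' ^ ((2 : ℝ) - d))
      - (dist ζ ζ' ^ 2 +
            2 * ζ (⟨0, by omega⟩ : Fin d) * ζ' (⟨0, by omega⟩ : Fin d) +
            ((d : ℝ) - 2) * ζ (⟨0, by omega⟩ : Fin d) ^ 2) *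
          r ^ ((2 : ℝ) - d) / (d : ℝ)
      + r ^ ((4 : ℝ) - d) / ((d : ℝ) - 4)) :
    (∀ ζ : EuclideanSpace ℝ (Fin d), dist ζ ζ' = r → P ζ = 0) ∧
    (∀ ζ : EuclideanSpace ℝ (Fin d),
      ζ (⟨0, by omega⟩ : Fin d) ≠ 0 → ζ ≠ ζ' →
        ζ (⟨0, by omega⟩ : Fin d) * lap P ζ =
          2 * pd (⟨0, by omega⟩ : Fin d) P ζ) := by
  obtain rfl : P = pressure ⟨0, by omega⟩ ζ' r := funext hP
  exact ⟨fun ζ hζ => pressure_eq_zero_of_dist_eq hd4 hr hζ,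
    fun ζ _ hζ => apply_mul_lap_pressure hd4 hζ⟩
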